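/- Let η₁, η₂, η₃ be three linearly independent lightlike covectors in Minkowski space ℝ^{1+3}, and let v ∈ ℝ^{1+3} be a nonzero vector with ηⱼ(v) = 0 for j = 1, 2, 3. Then v is spacelike, i.e. q(v) > 0. -/
import Mathlib

/-- Minkowski quadratic form on ℝ^{1+3}. -/
def minkQ (x : Fin 4 → ℝ) : ℝ := -(x 0)^2 + (x 1)^2 + (x 2)^2 + (x 3)^2

/-- Minkowski bilinear form on ℝ^{1+3} (pairing a covector, identified with a vector
via the metric, with a vector). -/
def minkB (x y : Fin 4 → ℝ) : ℝ := -(x 0) * y 0 + x 1 * y 1 + x 2 * y 2 + x 3 * y 3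

/-- Lagrange-type identity specialized to a null covector orthogonal to v. -/
lemma minkAuxKey (η v : Fin 4 → ℝ) (hq : minkQ η = 0) (hb : minkB η v = 0) :
    (η 0)^2 * (((v 1)^2 + (v 2)^2 + (v 3)^2) - (v 0)^2)
      = (η 1 * v 2 - η 2 * v 1)^2 + (η 1 * v 3 - η 3 * v 1)^2 + (η 2 * v 3 - η 3 * v 2)^2 := by
  simp only [minkQ, minkB] at hq hb
  linear_combination (-((v 1)^2 + (v 2)^2 + (v 3)^2)) * hq
    + (η 0 * v 0 + η 1 * v 1 + η 2 * v 2 + η 3 * v 3) * hb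

/-- A null covector orthogonal to a timelike vector vanishes. -/
lemma minkAux1 (η v : Fin 4 → ℝ) (hq : minkQ η = 0) (hb : minkB η v = 0)
    (hv : minkQ v < 0) : η = 0 := by
  have key := minkAuxKey η v hq hb
  simp only [minkQ, minkB] at hq hb hv
  have h0 : η 0 = 0 := by
    have hsq : (η 0)^2 ≤ 0 := by
      nlinarith [sq_nonneg (η 1 * v 2 - η 2 * v 1), sq_nonneg (η 1 * v 3 - η 3 * v 1),
        sq_nonneg (η 2 * v 3 - η 3 * v 2)]
    have h2 : (η 0)^2 = 0 := le_antisymm hsq (sq_nonneg _)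
    exact (pow_eq_zero_iff two_ne_zero).mp h2
  have h1 : η 1 = 0 := by nlinarith [sq_nonneg (η 1), sq_nonneg (η 2), sq_nonneg (η 3)]
  have h2 : η 2 = 0 := by nlinarith [sq_nonneg (η 1), sq_nonneg (η 2), sq_nonneg (η 3)]
  have h3 : η 3 = 0 := by nlinarith [sq_nonneg (η 1), sq_nonneg (η 2), sq_nonneg (η 3)]
  funext i
  fin_cases i <;> simp [h0, h1, h2, h3]

/-- A null covector orthogonal to a nonzero null vector is proportional to it. -/
lemma minkAux2 (η v : Fin 4 → ℝ) (hq : minkQ η = 0) (hb : minkB η v = 0)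
    (hqv : minkQ v = 0) (hv : v ≠ 0) : η = (η 0 / v 0) • v := by
  have key := minkAuxKey η v hq hb
  simp only [minkQ, minkB] at hq hb hqv
  have hv0 : v 0 ≠ 0 := by
    intro h0
    apply hv
    have h1 : v 1 = 0 := by nlinarith [sq_nonneg (v 1), sq_nonneg (v 2), sq_nonneg (v 3)]
    have h2 : v 2 = 0 := by nlinarith [sq_nonneg (v 1), sq_nonneg (v 2), sq_nonneg (v 3)]
    have h3 : v 3 = 0 := by nlinarith [sq_nonneg (v 1), sq_nonneg (v 2), sq_nonneg (v 3)]
    funext i; fin_cases i <;> simp [h0, h1, h2, h3]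
  have hsum : (η 1 * v 2 - η 2 * v 1)^2 + (η 1 * v 3 - η 3 * v 1)^2
      + (η 2 * v 3 - η 3 * v 2)^2 = 0 := by
    rw [← key]
    have hz : ((v 1)^2 + (v 2)^2 + (v 3)^2) - (v 0)^2 = 0 := by linarith
    rw [hz, mul_zero]
  have p1 := sq_nonneg (η 1 * v 2 - η 2 * v 1)
  have p2 := sq_nonneg (η 1 * v 3 - η 3 * v 1)
  have p3 := sq_nonneg (η 2 * v 3 - η 3 * v 2)
  have hc12 : η 1 * v 2 - η 2 * v 1 = 0 :=
    (pow_eq_zero_iff two_ne_zero).mp (by linarith)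
  have hc13 : η 1 * v 3 - η 3 * v 1 = 0 :=
    (pow_eq_zero_iff two_ne_zero).mp (by linarith)
  have hc23 : η 2 * v 3 - η 3 * v 2 = 0 :=
    (pow_eq_zero_iff two_ne_zero).mp (by linarith)
  have e1 : η 1 * v 0 = η 0 * v 1 := by
    apply mul_right_cancel₀ hv0
    linear_combination (-(η 1)) * hqv + (v 2) * hc12 + (v 3) * hc13 + (v 1) * hb
  have e2 : η 2 * v 0 = η 0 * v 2 := by
    apply mul_right_cancel₀ hv0
    linear_combination (-(η 2)) * hqv + (-(v 1)) * hc12 + (v 3) * hc23 + (v 2) * hb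
  have e3 : η 3 * v 0 = η 0 * v 3 := by
    apply mul_right_cancel₀ hv0
    linear_combination (-(η 3)) * hqv + (-(v 1)) * hc13 + (-(v 2)) * hc23 + (v 3) * hb
  funext i
  fin_cases i
  · show η 0 = η 0 / v 0 * v 0
    field_simp
  · show η 1 = η 0 / v 0 * v 1
    field_simp
    linarith
  · show η 2 = η 0 / v 0 * v 2
    field_simp
    linarith
  · show η 3 = η 0 / v 0 * v 3
    field_simp
    linarith

theorem stmt4 (η₁ η₂ η₃ v : Fin 4 → ℝ)
    (hl1 : minkQ η₁ = 0) (hl2 : minkQ η₂ = 0) (hl3 : minkQ η₃ = 0)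
    (hind : LinearIndependent ℝ ![η₁, η₂, η₃])
    (hv : v ≠ 0)
    (hp1 : minkB η₁ v = 0) (hp2 : minkB η₂ v = 0) (hp3 : minkB η₃ v = 0) :
    0 < minkQ v := by
  have hne1 : η₁ ≠ 0 := by
    have := hind.ne_zero 0
    simpa using this
  rcases lt_trichotomy (minkQ v) 0 with hneg | hzero | hpos
  · exact absurd (minkAux1 η₁ v hl1 hp1 hneg) hne1
  · exfalso
    have h1 := minkAux2 η₁ v hl1 hp1 hzero hv
    have h2 := minkAux2 η₂ v hl2 hp2 hzero hv
    set c₁ := η₁ 0 / v 0 with hc₁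
    set c₂ := η₂ 0 / v 0 with hc₂
    rw [Fintype.linearIndependent_iff] at hind
    have hsum0 : ∑ i, ![c₂, -c₁, (0:ℝ)] i • ![η₁, η₂, η₃] i = 0 := by
      simp only [Fin.sum_univ_three, Matrix.cons_val_zero, Matrix.cons_val_one,
        Matrix.head_cons, Matrix.cons_val_two, Matrix.tail_cons]
      rw [h1, h2]
      rw [smul_smul, smul_smul, ← add_smul]
      have hcc : c₂ * c₁ + -c₁ * c₂ = 0 := by ring
      rw [hcc, zero_smul, zero_smul, add_zero]
    have hg := hind ![c₂, -c₁, (0:ℝ)] hsum0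
    have hc1 : c₁ = 0 := by
      have := hg 1
      simp at this
      linarith
    rw [hc1, zero_smul] at h1
    exact hne1 h1
  · exact hpos
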